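/- For n ≥ 1, the trace distance between the two parity-conditioned ensemble states σ₀ and σ₁ equals (√2/2)^n: D(σ₀, σ₁) = (1/2)·tr |σ₀ − σ₁| = (1/√2)^n. -/

import Mathlib

open Matrix Finset ComplexOrder

/-- Parity of a bit string. -/
def parity {n : ℕ} (ν : Fin n → ZMod 2) : ZMod 2 := ∑ l, ν l

/-- Tensor product of a family of one-qubit matrices, as a matrix indexed by bit strings. -/
def tens {n : ℕ} (A : Fin n → Matrix (ZMod 2) (ZMod 2) ℂ) :
    Matrix (Fin n → ZMod 2) (Fin n → ZMod 2) ℂ :=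
  Matrix.of fun x y => ∏ l, A l (x l) (y l)

/-- `P 0 = |0⟩⟨0|`, `P 1 = |+⟩⟨+|`. -/
noncomputable def projP (b : ZMod 2) : Matrix (ZMod 2) (ZMod 2) ℂ :=
  if b = 0 then !![1, 0; 0, 0] else (1 / 2 : ℂ) • !![1, 1; 1, 1]

/-- The parity-conditioned ensemble state `σ_b`. -/
noncomputable def sigma (n : ℕ) (b : ZMod 2) :
    Matrix (Fin n → ZMod 2) (Fin n → ZMod 2) ℂ :=
  (1 / 2 ^ (n - 1) : ℂ) •
    ∑ j ∈ Finset.univ.filter (fun j : Fin n → ZMod 2 => parity j = b),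
      tens (fun l => projP (j l))

/-- `|A|` is the positive semidefinite square root of `AᴴA`. -/
noncomputable def matAbs {m : Type*} [Fintype m] [DecidableEq m] (A : Matrix m m ℂ) :
    Matrix m m ℂ :=
  let hA := (Matrix.posSemidef_conjTranspose_mul_self A).1
  hA.eigenvectorUnitary.1 * diagonal ((↑) ∘ (√·) ∘ hA.eigenvalues) *
    (star hA.eigenvectorUnitary : Matrix m m ℂ)

/-- The trace norm `‖A‖_tr = tr |A|` (a real number). -/
noncomputable def traceNorm {m : Type*} [Fintype m] [DecidableEq m] (A : Matrix m m ℂ) : ℝ :=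
  (matAbs A).trace.re

/-!
With `D = P(0) - P(1)`, sorting the strings `j` by parity gives
`σ₀ - σ₁ = 2^{1-n} ∑_j (-1)^{P(j)} ⨂_l P(j l)`; since `(-1)^{P(j)} = ∏_l (-1)^{j l}`, the sum
factorises as `2^{1-n} D^{⊗n}`. Now `Dᴴ D = 1/2`, so `(σ₀ - σ₁)ᴴ (σ₀ - σ₁)` is the scalar
`4^{1-n} 2^{-n}`, hence `|σ₀ - σ₁| = 2^{1-n} 2^{-n/2} · 1`, whose trace over the `2^n` basis
strings is `2 · 2^{-n/2}`.
-/

section MatAbs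

variable {m : Type*} [Fintype m] [DecidableEq m]

theorem matAbs_eq_smul_one {A : Matrix m m ℂ} {r : ℝ} (hr : 0 ≤ r)
    (hA : Aᴴ * A = ((r ^ 2 : ℝ) : ℂ) • 1) : matAbs A = (r : ℂ) • 1 := by
  set hAA := (posSemidef_conjTranspose_mul_self A).1
  have hdiag := hAA.conjStarAlgAut_star_eigenvectorUnitary
  rw [Unitary.conjStarAlgAut_star_apply] at hdiag
  set U := hAA.eigenvectorUnitary
  set ev := hAA.eigenvalues
  -- a scalar matrix is fixed by unitary conjugation, so all eigenvalues equal `r ^ 2`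
  rw [hA, Matrix.mul_smul, mul_one, Matrix.smul_mul, Unitary.coe_star_mul_self] at hdiag
  have hev : ev = fun _ => r ^ 2 := by
    rw [smul_one_eq_diagonal] at hdiag
    funext i
    exact RCLike.ofReal_injective (K := ℂ) (congrFun (diagonal_injective hdiag) i).symm
  have hsqrt : diagonal (((↑) : ℝ → ℂ) ∘ (√·) ∘ ev) = (r : ℂ) • 1 := by
    rw [hev, smul_one_eq_diagonal]
    simp [Real.sqrt_sq hr]
  change U.1 * diagonal _ * (star U : Matrix m m ℂ) = _
  rw [hsqrt, Matrix.mul_smul, mul_one, Matrix.smul_mul, mem_unitaryGroup_iff.mp U.2]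

theorem traceNorm_eq_mul_card {A : Matrix m m ℂ} {r : ℝ} (hr : 0 ≤ r)
    (hA : Aᴴ * A = ((r ^ 2 : ℝ) : ℂ) • 1) : traceNorm A = r * Fintype.card m := by
  rw [traceNorm, matAbs_eq_smul_one hr hA, trace_smul, trace_one, smul_eq_mul]
  norm_cast

end MatAbs

def paritySign (b : ZMod 2) : ℂ := (-1) ^ b.val

@[simp]
theorem paritySign_zero : paritySign 0 = 1 := by
  simp [paritySign]

@[simp]
theorem paritySign_one : paritySign 1 = -1 := by
  simp [paritySign, ZMod.val_one_eq_one_mod]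

theorem paritySign_add (a b : ZMod 2) : paritySign (a + b) = paritySign a * paritySign b := by
  rw [paritySign, ZMod.val_add, ← neg_one_pow_eq_pow_mod_two, pow_add]
  rfl

theorem paritySign_sum {ι : Type*} (s : Finset ι) (g : ι → ZMod 2) :
    paritySign (∑ i ∈ s, g i) = ∏ i ∈ s, paritySign (g i) := by
  induction s using Finset.cons_induction with
  | empty => rfl
  | cons a s ha ih => rw [sum_cons, prod_cons, paritySign_add, ih]

theorem sum_paritySign_smul {M : Type*} [AddCommGroup M] [Module ℂ M] (f : ZMod 2 → M) :
    ∑ b, paritySign b • f b = f 0 - f 1 := by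
  have hsum : ∑ b, paritySign b • f b = paritySign 0 • f 0 + paritySign 1 • f 1 :=
    Fin.sum_univ_two _
  rw [hsum, paritySign_zero, paritySign_one, one_smul, neg_one_smul, sub_eq_add_neg]

section Tens

variable {n : ℕ}

theorem tens_mul (A B : Fin n → Matrix (ZMod 2) (ZMod 2) ℂ) :
    tens A * tens B = tens (fun l => A l * B l) := by
  ext x y
  simp only [tens, mul_apply, of_apply, Fintype.prod_sum, prod_mul_distrib]

theorem tens_conjTranspose (A : Fin n → Matrix (ZMod 2) (ZMod 2) ℂ) :
    (tens A)ᴴ = tens (fun l => (A l)ᴴ) := by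
  ext x y
  simp only [tens, conjTranspose_apply, of_apply, star_prod]

theorem tens_smul (c : Fin n → ℂ) (A : Fin n → Matrix (ZMod 2) (ZMod 2) ℂ) :
    tens (fun l => c l • A l) = (∏ l, c l) • tens A := by
  ext x y
  simp only [tens, Matrix.smul_apply, of_apply, smul_eq_mul, prod_mul_distrib]

theorem tens_one : tens (fun _ : Fin n => (1 : Matrix (ZMod 2) (ZMod 2) ℂ)) = 1 := by
  ext x y
  simp only [tens, of_apply, one_apply, prod_boole, mem_univ, forall_const, funext_iff]

theorem sum_tens (B : Fin n → ZMod 2 → Matrix (ZMod 2) (ZMod 2) ℂ) :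
    ∑ j : Fin n → ZMod 2, tens (fun l => B l (j l)) = tens (fun l => ∑ b, B l b) := by
  ext x y
  simp only [tens, Matrix.sum_apply, of_apply, Fintype.prod_sum]

theorem sum_paritySign_smul_tens (A : ZMod 2 → Matrix (ZMod 2) (ZMod 2) ℂ) :
    ∑ j : Fin n → ZMod 2, paritySign (parity j) • tens (fun l => A (j l)) =
      tens (fun _ => A 0 - A 1) := by
  simp only [parity, paritySign_sum, ← tens_smul]
  rw [sum_tens (fun _ b => paritySign b • A b), sum_paritySign_smul]

end Tens

theorem projP_sub_conjTranspose_mul_self :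
    (projP 0 - projP 1)ᴴ * (projP 0 - projP 1) = (1 / 2 : ℂ) • 1 := by
  have h : ((!![1, 0; 0, 0] : Matrix (Fin 2) (Fin 2) ℂ) - (1 / 2 : ℂ) • !![1, 1; 1, 1])ᴴ *
      ((!![1, 0; 0, 0] : Matrix (Fin 2) (Fin 2) ℂ) - (1 / 2 : ℂ) • !![1, 1; 1, 1]) =
        (1 / 2 : ℂ) • 1 := by
    ext i j
    fin_cases i <;> fin_cases j <;> norm_num [mul_apply, Fin.sum_univ_two, Complex.conj_ofNat]
  -- `ZMod 2` is `Fin 2` by definition, so this is the same statement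
  exact h

theorem sigma_zero_sub_sigma_one (n : ℕ) :
    sigma n 0 - sigma n 1 = (1 / 2 ^ (n - 1) : ℂ) • tens (fun _ => projP 0 - projP 1) := by
  rw [← sum_paritySign_smul_tens, sigma, sigma, ← smul_sub, sum_filter, sum_filter,
    ← sum_sub_distrib]
  congr 1
  refine sum_congr rfl fun j _ => ?_
  rcases (by decide : ∀ b : ZMod 2, b = 0 ∨ b = 1) (parity j) with h | h <;> simp [h]

theorem conjTranspose_mul_self_sigma_sub (n : ℕ) :
    (sigma n 0 - sigma n 1)ᴴ * (sigma n 0 - sigma n 1) =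
      (((1 / 2 ^ (n - 1) * (1 / √2) ^ n) ^ 2 : ℝ) : ℂ) • 1 := by
  rw [sigma_zero_sub_sigma_one, conjTranspose_smul, tens_conjTranspose, smul_mul_smul_comm,
    tens_mul, projP_sub_conjTranspose_mul_self, tens_smul (fun _ => (1 / 2 : ℂ)) (fun _ => 1),
    tens_one, prod_const, card_univ, Fintype.card_fin, smul_smul]
  congr 1
  have hr : (1 / 2 ^ (n - 1) * (1 / √2) ^ n) ^ 2 = (1 / 2 ^ (n - 1)) ^ 2 * (1 / 2 : ℝ) ^ n := by
    rw [mul_pow, ← pow_mul, mul_comm n 2, pow_mul, div_pow 1 √2, Real.sq_sqrt zero_le_two, one_pow]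
  rw [hr, star_div₀, star_one, star_pow, star_ofNat]
  push_cast
  ring

/-- `D(σ₀, σ₁) = (1/2) tr |σ₀ − σ₁| = (1/√2)^n`. -/
theorem traceDist_sigma (n : ℕ) (hn : 1 ≤ n) :
    (1 / 2) * traceNorm (sigma n 0 - sigma n 1) = (1 / Real.sqrt 2) ^ n := by
  rw [traceNorm_eq_mul_card (by positivity) (conjTranspose_mul_self_sigma_sub n),
    Fintype.card_fun, ZMod.card, Fintype.card_fin]
  obtain ⟨k, rfl⟩ := Nat.exists_eq_add_of_le' hn
  push_cast
  field_simp
  ring
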